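/- The Jacobi–Anger expansion: for all real τ and θ, sin(τ cos θ) = -2 Σ_{m=1}^∞ (-1)^m J_{2m-1}(τ) cos((2m-1)θ). -/

import Mathlib

/-!
Expand `sin (τ cos θ)` in its Taylor series and write each odd power of `2 cos θ` as
`(2 cos θ) ^ (2j+1) = ∑_{n+k=j} C(2j+1, k) · 2 cos ((2n+1)θ)` (binomial theorem for
`e^{iθ} + e^{-iθ}`, pairing the terms `e^{±i(2n+1)θ}`). This gives a double series indexed
by `(n, k)` which is dominated by a product of two exponential series; summing it over `k`
first instead of along the antidiagonals `n + k = j` produces the power series of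
`J_{2n+1}(τ)`.
-/

/-- Bessel function of the first kind of order `m`. -/
noncomputable def besselJ (m : ℕ) (τ : ℝ) : ℝ :=
  ∑' k : ℕ, (-1 : ℝ) ^ k / (Nat.factorial k * Nat.factorial (m + k)) * (τ / 2) ^ (2 * k + m)

open Finset Real Nat

theorem add_pow_two_mul_add_one {R : Type*} [CommSemiring R] (x y : R) (j : ℕ) :
    (x + y) ^ (2 * j + 1) = ∑ p ∈ antidiagonal j,
      ((2 * j + 1).choose p.2 : R) * (x * y) ^ p.2 * (x ^ (2 * p.1 + 1) + y ^ (2 * p.1 + 1)) := by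
  rw [add_pow, show 2 * j + 1 + 1 = (j + 1) + (j + 1) by ring, sum_range_add,
    ← sum_range_reflect, Nat.sum_antidiagonal_eq_sum_range_succ
      (fun n k => ((2 * j + 1).choose k : R) * (x * y) ^ k * (x ^ (2 * n + 1) + y ^ (2 * n + 1))),
    ← sum_add_distrib]
  refine sum_congr rfl fun k hk => ?_
  obtain ⟨i, rfl⟩ : ∃ i, j = k + i :=
    Nat.exists_eq_add_of_le (by simpa [Nat.lt_succ_iff] using hk)
  simp only [show k + i + 1 - 1 - k = i by omega, show k + i - k = i by omega,
    show 2 * (k + i) + 1 - i = 2 * k + 1 + i by omega,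
    show 2 * (k + i) + 1 - (k + i + 1 + k) = i by omega,
    Nat.choose_symm_of_eq_add (show 2 * (k + i) + 1 = k + i + 1 + k + i by ring)]
  ring

theorem two_cos_pow_two_mul_add_one (θ : ℝ) (j : ℕ) :
    (2 * cos θ) ^ (2 * j + 1) =
      ∑ p ∈ antidiagonal j,
        ((2 * j + 1).choose p.2 : ℝ) * (2 * cos ((2 * p.1 + 1) * θ)) := by
  have two_cos_nat_mul (m : ℕ) :
      2 * Complex.cos (m * θ) =
        Complex.exp (θ * Complex.I) ^ m + Complex.exp (-θ * Complex.I) ^ m := by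
    rw [Complex.two_cos, ← Complex.exp_nat_mul, ← Complex.exp_nat_mul]; ring_nf
  apply Complex.ofReal_injective
  push_cast
  rw [Complex.two_cos, add_pow_two_mul_add_one, ← Complex.exp_add]
  simp only [neg_mul, add_neg_cancel, Complex.exp_zero, one_pow, mul_one]
  refine sum_congr rfl fun p _ => ?_
  rw [← neg_mul, ← two_cos_nat_mul]
  push_cast; ring_nf

theorem Summable.tsum_eq_tsum_sum_antidiagonal {A α : Type*} [AddCommMonoid A] [HasAntidiagonal A]
    [AddCommMonoid α] [TopologicalSpace α] [ContinuousAdd α] [T3Space α] {f : A × A → α}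
    (hf : Summable f) : ∑' p, f p = ∑' n, ∑ p ∈ antidiagonal n, f p := by
  let e := HasAntidiagonal.sigmaAntidiagonalEquivProd (A := A)
  rw [← e.tsum_eq f, Summable.tsum_sigma' (f := fun c => f (e c))
    (fun n => (hasSum_fintype _).summable) (e.summable_iff.mpr hf)]
  exact tsum_congr fun n => Finset.tsum_subtype (antidiagonal n) f

noncomputable def besselJTerm (m : ℕ) (τ : ℝ) (k : ℕ) : ℝ :=
  (-1 : ℝ) ^ k / (k ! * (m + k)!) * (τ / 2) ^ (2 * k + m)

theorem abs_besselJTerm_le (m : ℕ) (τ : ℝ) (k : ℕ) :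
    |besselJTerm m τ k| ≤ (|τ| / 2) ^ m / m ! * (((|τ| / 2) ^ 2) ^ k / k !) := by
  have hfact : (m ! : ℝ) ≤ (m + k)! := mod_cast factorial_le (le_add_right m k)
  calc |besselJTerm m τ k| = (|τ| / 2) ^ (2 * k + m) / (k ! * (m + k)!) := by
        simp only [besselJTerm, abs_mul, abs_div, abs_pow, abs_neg, abs_one, one_pow, abs_cast,
          one_div, mul_inv_rev, abs_ofNat]
        ring
    _ ≤ (|τ| / 2) ^ (2 * k + m) / (k ! * m !) := by gcongr
    _ = _ := by rw [pow_add, pow_mul]; field_simp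

noncomputable def jacobiAngerTerm (τ θ : ℝ) (p : ℕ × ℕ) : ℝ :=
  (-1) ^ p.1 * besselJTerm (2 * p.1 + 1) τ p.2 * (2 * cos ((2 * p.1 + 1) * θ))

theorem summable_jacobiAngerTerm (τ θ : ℝ) : Summable (jacobiAngerTerm τ θ) := by
  set a := |τ| / 2
  have hodd : Summable fun n : ℕ => a ^ (2 * n + 1) / (2 * n + 1)! :=
    (Real.summable_pow_div_factorial a).comp_injective fun _ _ h => by simpa using h
  refine Summable.of_norm_bounded
    ((hodd.mul_of_nonneg (Real.summable_pow_div_factorial (a ^ 2))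
      (fun _ => by positivity) fun _ => by positivity).mul_left 2) fun p => ?_
  calc ‖jacobiAngerTerm τ θ p‖
      = 2 * (|besselJTerm (2 * p.1 + 1) τ p.2| * |cos ((2 * p.1 + 1) * θ)|) := by
        simp only [jacobiAngerTerm, norm_mul, norm_pow, norm_neg, norm_one, one_pow, norm_eq_abs,
          one_mul]
        ring
    _ ≤ 2 * ((a ^ (2 * p.1 + 1) / (2 * p.1 + 1)! * ((a ^ 2) ^ p.2 / p.2 !)) * 1) := by
        gcongr
        exacts [abs_besselJTerm_le _ τ _, abs_cos_le_one _]
    _ = _ := by rw [mul_one]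

theorem jacobiAngerTerm_of_mem_antidiagonal (τ θ : ℝ) {j : ℕ} {p : ℕ × ℕ}
    (hp : p ∈ antidiagonal j) :
    jacobiAngerTerm τ θ p = (-1) ^ j * (τ / 2) ^ (2 * j + 1) / (2 * j + 1)! *
      ((2 * j + 1).choose p.2 * (2 * cos ((2 * p.1 + 1) * θ))) := by
  obtain ⟨n, k⟩ := p
  obtain rfl : n + k = j := mem_antidiagonal.mp hp
  have hchoose :
      ((2 * (n + k) + 1).choose k : ℝ) * (2 * n + 1 + k)! * k ! = (2 * (n + k) + 1)! := by
    rw [show 2 * (n + k) + 1 = 2 * n + 1 + k + k by ring]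
    exact_mod_cast add_choose_mul_factorial_mul_factorial _ _
  have hchoose_ne : ((2 * (n + k) + 1).choose k : ℝ) ≠ 0 :=
    Nat.cast_ne_zero.mpr (choose_pos (by omega)).ne'
  rw [jacobiAngerTerm, besselJTerm, ← hchoose, show 2 * k + (2 * n + 1) = 2 * (n + k) + 1 by ring]
  field_simp
  ring

theorem sum_antidiagonal_jacobiAngerTerm (τ θ : ℝ) (j : ℕ) :
    ∑ p ∈ antidiagonal j, jacobiAngerTerm τ θ p =
      (-1) ^ j * (τ * cos θ) ^ (2 * j + 1) / (2 * j + 1)! := by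
  rw [sum_congr rfl fun p => jacobiAngerTerm_of_mem_antidiagonal τ θ, ← mul_sum,
    ← two_cos_pow_two_mul_add_one, mul_div_right_comm, mul_assoc, ← mul_pow]
  ring_nf

/-- Jacobi–Anger expansion for the sine: the sum over `n : ℕ` corresponds to the
sum over `m = n + 1 ≥ 1` (so `2m - 1 = 2n + 1`) in the usual formulation. -/
theorem jacobi_anger_sin (τ θ : ℝ) :
    Real.sin (τ * Real.cos θ) =
      -2 * ∑' n : ℕ, (-1 : ℝ) ^ (n + 1) * besselJ (2 * n + 1) τ *
        Real.cos ((2 * n + 1) * θ) := by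
  have hs := summable_jacobiAngerTerm τ θ
  calc sin (τ * cos θ)
      = ∑' j, ∑ p ∈ antidiagonal j, jacobiAngerTerm τ θ p := by
        simp_rw [sum_antidiagonal_jacobiAngerTerm, Real.sin_eq_tsum]
    _ = ∑' n, ∑' k, jacobiAngerTerm τ θ (n, k) :=
        hs.tsum_eq_tsum_sum_antidiagonal.symm.trans (hs.tsum_prod' hs.prod_factor)
    _ = ∑' n, (-1) ^ n * besselJ (2 * n + 1) τ * (2 * cos ((2 * n + 1) * θ)) := by
        simp_rw [jacobiAngerTerm, tsum_mul_right, tsum_mul_left]; rfl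
    _ = _ := by
        rw [← tsum_mul_left]
        exact tsum_congr fun n => by ring
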